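/- Let A, B be elements of an associative ring with [B, A] = T and T central (commuting with A and B). Then for every natural number a, [B^a, A^a] = Σ_{a' = 1}^{a} (binomial(a, a'))² · a'! · T^{a'} · A^{a−a'} · B^{a−a'}. -/
import Mathlib

private lemma coeffNat (m n k : ℕ) :
    (m+1).choose (k+1) * n.choose (k+1) * (k+1).factorial =
    m.choose (k+1) * n.choose (k+1) * (k+1).factorial +
      m.choose k * n.choose k * k.factorial * (n - k) := by
  have h1 : n.choose (k+1) * (k+1) = n.choose k * (n - k) := Nat.choose_succ_right_eq n k
  rw [Nat.choose_succ_succ, add_mul, add_mul, add_comm]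
  congr 1
  rw [Nat.factorial_succ]
  calc m.choose k * n.choose (k+1) * ((k+1) * k.factorial)
      = m.choose k * (n.choose (k+1) * (k+1)) * k.factorial := by ring
    _ = m.choose k * (n.choose k * (n-k)) * k.factorial := by rw [h1]
    _ = m.choose k * n.choose k * k.factorial * (n-k) := by ring

private lemma lem1 {R : Type*} [Ring R] (A B T : R)
    (hT : B * A - A * B = T) (hTA : T * A = A * T) (n : ℕ) :
    B * A ^ n = A ^ n * B + n • (T * A ^ (n - 1)) := by
  induction n with
  | zero => simp
  | succ n ih =>
    have hBA : B * A = A * B + T := sub_eq_iff_eq_add'.mp hT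
    cases n with
    | zero => simpa using hBA
    | succ n =>
      have h : B * A ^ (n+2) = (B * A ^ (n+1)) * A := by rw [pow_succ, mul_assoc]
      have hAn : A ^ (n+1) * T = T * A ^ (n+1) := (Commute.pow_right hTA (n+1)).symm
      rw [h, ih]
      simp only [Nat.add_sub_cancel]
      rw [add_mul, smul_mul_assoc, mul_assoc T, ← pow_succ, mul_assoc, hBA, mul_add,
        ← mul_assoc, ← pow_succ, hAn, succ_nsmul (T * A ^ (n+1)) (n+1), add_assoc,
        add_comm (T * A ^ (n+1))]

private lemma key {R : Type*} [Ring R] (A B T : R)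
    (hT : B * A - A * B = T) (hTA : T * A = A * T) (hTB : T * B = B * T)
    (m n : ℕ) :
    B ^ m * A ^ n = ∑ k ∈ Finset.range (m+1),
      (m.choose k * n.choose k * k.factorial) • (T ^ k * A ^ (n - k) * B ^ (m - k)) := by
  induction m with
  | zero => simp
  | succ m ih =>
    have hCBT : ∀ k : ℕ, B * T ^ k = T ^ k * B := fun k =>
      (Commute.pow_right (Commute.symm hTB) k)
    have h : B ^ (m+1) * A ^ n = B * (B ^ m * A ^ n) := by rw [pow_succ', mul_assoc]
    rw [h, ih, Finset.mul_sum]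
    have hterm : ∀ k ∈ Finset.range (m+1),
        B * ((m.choose k * n.choose k * k.factorial) •
            (T ^ k * A ^ (n - k) * B ^ (m - k)))
        = (m.choose k * n.choose k * k.factorial) •
            (T ^ k * A ^ (n - k) * B ^ (m + 1 - k))
          + (m.choose k * n.choose k * k.factorial * (n - k)) •
            (T ^ (k+1) * A ^ (n - k - 1) * B ^ (m - k)) := by
      intro k hk
      have hkm : k ≤ m := Nat.lt_succ_iff.mp (Finset.mem_range.mp hk)
      have hmk : m - k + 1 = m + 1 - k := (Nat.succ_sub hkm).symm
      have hB : B * (T ^ k * A ^ (n - k) * B ^ (m - k))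
          = T ^ k * (B * A ^ (n - k)) * B ^ (m - k) := by
        rw [← mul_assoc, ← mul_assoc, hCBT k, mul_assoc (T ^ k) B]
      have inner : T ^ k * (A ^ (n-k) * B + (n-k) • (T * A ^ (n-k-1))) * B ^ (m-k)
          = T ^ k * A ^ (n-k) * B ^ (m-k+1)
            + (n-k) • (T ^ (k+1) * A ^ (n-k-1) * B ^ (m-k)) := by
        rw [mul_add, add_mul]
        congr 1
        · rw [mul_assoc, mul_assoc (A ^ (n-k)), ← pow_succ', ← mul_assoc]
        · rw [mul_smul_comm, smul_mul_assoc]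
          congr 2
          rw [← mul_assoc, ← pow_succ]
      rw [mul_smul_comm, hB, lem1 A B T hT hTA (n - k), inner, hmk, smul_add, smul_smul]
    rw [Finset.sum_congr rfl hterm, Finset.sum_add_distrib]
    have ext : ∑ k ∈ Finset.range (m+1),
        (m.choose k * n.choose k * k.factorial) •
          (T ^ k * A ^ (n - k) * B ^ (m + 1 - k))
        = ∑ k ∈ Finset.range (m+2),
        (m.choose k * n.choose k * k.factorial) •
          (T ^ k * A ^ (n - k) * B ^ (m + 1 - k)) := by
      rw [Finset.sum_range_succ (n := m+1)]
      simp [Nat.choose_succ_self]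
    rw [ext, Finset.sum_range_succ' _ (m+1), Finset.sum_range_succ' _ (m+1)]
    simp only [Nat.choose_zero_right, Nat.factorial_zero, Nat.sub_zero, pow_zero, one_mul,
      mul_one, Nat.add_sub_cancel]
    rw [add_right_comm, ← Finset.sum_add_distrib]
    congr 1
    refine Finset.sum_congr rfl fun k _ => ?_
    have e1 : n - (k+1) = n - k - 1 := by omega
    have e2 : m + 1 - (k+1) = m - k := by omega
    rw [coeffNat m n k, add_smul, e1, e2]

theorem stmt_6 {R : Type*} [Ring R] (A B T : R)
    (hT : B * A - A * B = T) (hTA : T * A = A * T) (hTB : T * B = B * T)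
    (a : ℕ) :
    B ^ a * A ^ a - A ^ a * B ^ a =
      ∑ a' ∈ Finset.Icc 1 a,
        ((a.choose a' : R) ^ 2 * (a'.factorial : R)) * T ^ a' * A ^ (a - a') * B ^ (a - a') := by
  have hk := key A B T hT hTA hTB a a
  have hset : Finset.range (a+1) = insert 0 (Finset.Icc 1 a) := by
    ext x; simp [Finset.mem_range, Finset.mem_Icc]; omega
  rw [hset, Finset.sum_insert (by simp)] at hk
  simp only [Nat.choose_zero_right, Nat.factorial_zero, Nat.sub_zero, pow_zero, one_mul,
    mul_one, one_smul] at hk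
  rw [hk, add_sub_cancel_left]
  refine Finset.sum_congr rfl fun k _ => ?_
  rw [nsmul_eq_mul]
  push_cast
  rw [sq]
  noncomm_ring
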